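/- Let (Σ,σ) be a primitive Markov subshift on a countable alphabet and let A : Σ → ℝ be a bounded above, locally Hölder continuous potential with inf A|_{⋃_{i∈F}[i]} > −∞. Then there exists a unique minimal, nonnegative, bounded and locally Hölder continuous function u_A : Σ → ℝ₊ with A + u_A − u_A∘σ ≤ β_A on Σ, minimal in the sense that u_A ≤ u for every nonnegative continuous function u : Σ → ℝ₊ satisfying A + u − u∘σ ≤ β_A on Σ. -/

import Mathlib

/-!
The minimal sub-action is `u_A(x) = sup {S_k(A - β_A)(y) : σ^k y = x}`. It is finite because
primitivity closes any orbit segment `y₀ … y_{k-1}` into a periodic orbit through `K₀` symbols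
of `F`: the equidistributed measure on that orbit is invariant, so its Birkhoff sum is at most
`(k + K₀) β_A`, while Hölder continuity and `inf A|_F > -∞` bound the cost of the closing.
Extending preimages by one step gives the sub-action inequality, telescoping
`A + v - v ∘ σ ≤ β_A` along an orbit gives minimality, and redirecting a preimage of `x` to a
preimage of a nearby `y` gives the Hölder estimate. Two minimal sub-actions dominate each other.
-/

open MeasureTheory Filter Topology Set

/-- Membership in the Markov shift: admissible transitions at every coordinate. -/
def InShift (M : ℕ → ℕ → Bool) (x : ℕ → ℕ) : Prop := ∀ j, M (x j) (x (j+1)) = true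

/-- The one-sided countable Markov shift `Σ` associated to the transition matrix `M`,
as a subtype of `ℕ → ℕ` (with the product topology, which is the topology induced by
the metric `d(x,y) = λ^{min{j : x_j ≠ y_j}}`). -/
abbrev ShiftSpace (M : ℕ → ℕ → Bool) := {x : ℕ → ℕ // InShift M x}

/-- The left shift map `σ`. -/
def shiftMap (M : ℕ → ℕ → Bool) (x : ShiftSpace M) : ShiftSpace M :=
  ⟨fun j => x.1 (j+1), fun j => x.2 (j+1)⟩

/-- `Agree M k x y` means the points `x, y` coincide on the first `k` coordinates;
for `k ≥ 1` this is exactly `d(x,y) ≤ λ^k` for the metric of the paper. -/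
def Agree (M : ℕ → ℕ → Bool) (k : ℕ) (x y : ShiftSpace M) : Prop :=
  ∀ j < k, x.1 j = y.1 j

/-- The sets `B_n` of symbols admitting admissible words of length `n+1` starting at them. -/
def BSet (M : ℕ → ℕ → Bool) : ℕ → Set ℕ
  | 0 => {i | ∃ j, M i j = true}
  | n+1 => {i | ∃ j ∈ BSet M n, M i j = true}

/-- `⋂_{n ≥ 0} B_n`. -/
def BInf (M : ℕ → ℕ → Bool) : Set ℕ := ⋂ n, BSet M n

/-- `M` is primitive with connecting set `F` and connection length `K₀`: any two symbols
of `⋂ B_n` can be joined by an admissible word of length `K₀` with all letters in `F`. -/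
def Primitive (M : ℕ → ℕ → Bool) (F : Set ℕ) (K₀ : ℕ) : Prop :=
  ∀ i ∈ BInf M, ∀ j ∈ BInf M, ∃ p : ℕ → ℕ,
    p 0 = i ∧ p (K₀ + 1) = j ∧ (∀ t, 1 ≤ t → t ≤ K₀ → p t ∈ F) ∧
    (∀ t ≤ K₀, M (p t) (p (t+1)) = true)

/-- `A` is locally Hölder continuous with constant `H`:
`Var_k(A) ≤ H ⬝ λ^k` for every `k ≥ 1`. -/
def LocHolder (M : ℕ → ℕ → Bool) (lam H : ℝ) (A : ShiftSpace M → ℝ) : Prop :=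
  ∀ k : ℕ, 1 ≤ k → ∀ x y : ShiftSpace M, Agree M k x y → A x - A y ≤ H * lam ^ k

/-- `A` is coercive: `sup A|_{[i]} → -∞` as `i → ∞`. -/
def Coercive (M : ℕ → ℕ → Bool) (A : ShiftSpace M → ℝ) : Prop :=
  ∀ C : ℝ, ∃ N : ℕ, ∀ i : ℕ, N ≤ i → ∀ x : ShiftSpace M, x.1 0 = i → A x ≤ C

/-- The union of cylinders `⋃_{i ∈ F} [i]`. -/
def FCyl (M : ℕ → ℕ → Bool) (F : Set ℕ) : Set (ShiftSpace M) := {x | x.1 0 ∈ F}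

/-- `μ` is a `σ`-invariant Borel probability measure. -/
def InvProb (M : ℕ → ℕ → Bool) (μ : Measure (ShiftSpace M)) : Prop :=
  IsProbabilityMeasure μ ∧ μ.map (shiftMap M) = μ

/-- The ergodic maximizing value `β_A = sup {∫ A dμ : μ ∈ M_σ}`. -/
noncomputable def betaA (M : ℕ → ℕ → Bool) (A : ShiftSpace M → ℝ) : ℝ :=
  sSup {r | ∃ μ : Measure (ShiftSpace M), InvProb M μ ∧ Integrable A μ ∧ ∫ x, A x ∂μ = r}

/-- The compact subshift `Σ_I` on the finite alphabet `{0, …, I}`. -/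
def SpaceI (M : ℕ → ℕ → Bool) (I : ℕ) : Set (ShiftSpace M) := {x | ∀ j, x.1 j ≤ I}

/-- `β_A(I) = max {∫ A dμ : μ ∈ M_σ, supp μ ⊆ Σ_I}`. -/
noncomputable def betaAI (M : ℕ → ℕ → Bool) (A : ShiftSpace M → ℝ) (I : ℕ) : ℝ :=
  sSup {r | ∃ μ : Measure (ShiftSpace M), InvProb M μ ∧ μ (SpaceI M I) = 1 ∧
    Integrable A μ ∧ ∫ x, A x ∂μ = r}

/-- Birkhoff sum `S_k A`. -/
noncomputable def birkhoff (M : ℕ → ℕ → Bool) (A : ShiftSpace M → ℝ) (k : ℕ)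
    (x : ShiftSpace M) : ℝ :=
  ∑ j ∈ Finset.range k, A ((shiftMap M)^[j] x)

/-- The `k`-th variation `Var_k(A)`. -/
noncomputable def VarK (M : ℕ → ℕ → Bool) (A : ShiftSpace M → ℝ) (k : ℕ) : ℝ :=
  sSup {r | ∃ x y : ShiftSpace M, Agree M k x y ∧ A x - A y = r}

/-- `Var(A) = ∑_{k ≥ 1} Var_k(A)`. -/
noncomputable def VarSum (M : ℕ → ℕ → Bool) (A : ShiftSpace M → ℝ) : ℝ :=
  ∑' k : ℕ, VarK M A (k + 1)

/-- `sup A`. -/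
noncomputable def supA (M : ℕ → ℕ → Bool) (A : ShiftSpace M → ℝ) : ℝ :=
  sSup (Set.range A)

/-- `inf A|_{⋃_{i ∈ F} [i]}`. -/
noncomputable def infF (M : ℕ → ℕ → Bool) (F : Set ℕ) (A : ShiftSpace M → ℝ) : ℝ :=
  sInf (A '' FCyl M F)

/-- The defining set for `u_A(x)`: all values `S_k(A - β_A)(y)` with `σ^k(y) = x`. -/
noncomputable def uASet (M : ℕ → ℕ → Bool) (A : ShiftSpace M → ℝ) (x : ShiftSpace M) :
    Set ℝ :=
  {r | ∃ (k : ℕ) (y : ShiftSpace M), (shiftMap M)^[k] y = x ∧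
    birkhoff M A k y - k * betaA M A = r}

/-- The candidate minimal sub-action
`u_A(x) = sup {S_k(A - β_A)(y) : k ≥ 0, σ^k(y) = x}`. -/
noncomputable def uA (M : ℕ → ℕ → Bool) (A : ShiftSpace M → ℝ) (x : ShiftSpace M) : ℝ :=
  sSup (uASet M A x)

/-- The non-wandering set `Ω(A, I)` with respect to `A|_{Σ_I}`. -/
def NonWandering (M : ℕ → ℕ → Bool) (A : ShiftSpace M → ℝ) (I : ℕ) :
    Set (ShiftSpace M) :=
  {x | x ∈ SpaceI M I ∧ ∀ ε : ℝ, 0 < ε → ∀ m : ℕ,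
    ∃ y ∈ SpaceI M I, ∃ n : ℕ, 1 ≤ n ∧ Agree M m x y ∧
      Agree M m x ((shiftMap M)^[n] y) ∧
      |birkhoff M A n y - n * betaAI M A I| < ε}

section OrbitMeasure

open scoped ENNReal

variable {α : Type*} [MeasurableSpace α]

noncomputable def orbitMeasure (f : α → α) (n : ℕ) (z : α) : Measure α :=
  (n : ℝ≥0∞)⁻¹ • ∑ j ∈ Finset.range n, Measure.dirac (f^[j] z)

lemma isProbabilityMeasure_orbitMeasure [MeasurableSingletonClass α] {f : α → α} {n : ℕ}
    (hn : n ≠ 0) (z : α) : IsProbabilityMeasure (orbitMeasure f n z) := by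
  constructor
  simp only [orbitMeasure, Measure.smul_apply, Measure.coe_finsetSum, Finset.sum_apply,
    measure_univ, Finset.sum_const, Finset.card_range, nsmul_eq_mul, mul_one, smul_eq_mul]
  exact ENNReal.inv_mul_cancel (Nat.cast_ne_zero.2 hn) (ENNReal.natCast_ne_top n)

lemma map_orbitMeasure {f : α → α} (hf : Measurable f) {n : ℕ} {z : α}
    (hz : Function.IsPeriodicPt f n z) : (orbitMeasure f n z).map f = orbitMeasure f n z := by
  rw [orbitMeasure, Measure.map_smul, Measure.map_finset_sum hf.aemeasurable]
  simp_rw [Measure.map_dirac' hf, ← Function.iterate_succ_apply' f]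
  congr 1
  cases n with
  | zero => simp only [Finset.sum_range_zero]
  | succ n => rw [Finset.sum_range_succ, Finset.sum_range_succ', hz.eq, Function.iterate_zero_apply]

lemma integrable_orbitMeasure [MeasurableSingletonClass α] (g : α → ℝ) (f : α → α)
    {n : ℕ} (hn : n ≠ 0) (z : α) : Integrable g (orbitMeasure f n z) :=
  (integrable_finsetSum_measure.2 fun _ _ => integrable_dirac enorm_lt_top).smul_measure
    (ENNReal.inv_ne_top.2 (Nat.cast_ne_zero.2 hn))

lemma integral_orbitMeasure [MeasurableSingletonClass α] (g : α → ℝ) (f : α → α) (n : ℕ)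
    (z : α) :
    ∫ x, g x ∂orbitMeasure f n z = (n : ℝ)⁻¹ * ∑ j ∈ Finset.range n, g (f^[j] z) := by
  rw [orbitMeasure, integral_smul_measure, integral_finsetSum_measure fun _ _ =>
    integrable_dirac enorm_lt_top]
  simp [ENNReal.toReal_inv]

end OrbitMeasure

section Shift

variable {M : ℕ → ℕ → Bool}

lemma shiftMap_iterate_apply (m : ℕ) (x : ShiftSpace M) (j : ℕ) :
    ((shiftMap M)^[m] x).1 j = x.1 (j + m) := by
  induction m generalizing x j with
  | zero => rfl
  | succ n ih => exact ih (shiftMap M x) j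

lemma measurable_shiftMap : Measurable (shiftMap M) := by
  refine Measurable.subtype_mk (measurable_pi_iff.2 fun j => ?_)
  exact (measurable_pi_apply (j + 1)).comp measurable_subtype_coe

lemma Agree.shiftMap_iterate {n j : ℕ} {x y : ShiftSpace M} (h : Agree M (n + j) x y) :
    Agree M n ((shiftMap M)^[j] x) ((shiftMap M)^[j] y) := fun i hi => by
  simp only [shiftMap_iterate_apply, h (i + j) (by omega)]

lemma agree_mem_nhds (k : ℕ) (x : ShiftSpace M) : {y | Agree M k x y} ∈ 𝓝 x := by
  have hcoord (j : ℕ) : ∀ᶠ y in 𝓝 x, x.1 j = y.1 j := by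
    have hj := ((continuous_apply j).comp continuous_subtype_val).tendsto x
    rw [nhds_discrete ℕ] at hj
    exact (tendsto_pure.1 hj).mono fun _ h => h.symm
  filter_upwards [(Finset.range k).eventually_all.2 fun j _ => hcoord j] with y hy j hj
  exact hy j (Finset.mem_range.2 hj)

lemma LocHolder.continuous {lam H : ℝ} {u : ShiftSpace M → ℝ} (h : LocHolder M lam H u)
    (hlam₀ : 0 ≤ lam) (hlam₁ : lam < 1) : Continuous u := by
  refine continuous_iff_continuousAt.2 fun x => Metric.tendsto_nhds.2 fun ε hε => ?_
  have hsmall : Tendsto (fun k : ℕ => H * lam ^ (k + 1)) atTop (𝓝 0) := by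
    simpa using ((tendsto_pow_atTop_nhds_zero_of_lt_one hlam₀ hlam₁).comp
      (tendsto_add_atTop_nat 1)).const_mul H
  obtain ⟨k, hk⟩ := (hsmall.eventually (gt_mem_nhds hε)).exists
  filter_upwards [agree_mem_nhds (k + 1) x] with y hy
  rw [Real.dist_eq, abs_sub_lt_iff]
  exact ⟨(h _ le_add_self y x fun j hj => (hy j hj).symm).trans_lt hk,
    (h _ le_add_self x y hy).trans_lt hk⟩

lemma birkhoff_add (A : ShiftSpace M → ℝ) (k l : ℕ) (x : ShiftSpace M) :
    birkhoff M A (k + l) x = birkhoff M A k x + birkhoff M A l ((shiftMap M)^[k] x) := by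
  rw [birkhoff, birkhoff, birkhoff, Finset.sum_range_add]
  refine congrArg _ (Finset.sum_congr rfl fun j _ => ?_)
  rw [← Function.iterate_add_apply, add_comm]

lemma sum_range_pow_sub_le {lam : ℝ} (hlam₀ : 0 ≤ lam) (hlam₁ : lam < 1) (m k : ℕ) :
    ∑ j ∈ Finset.range m, lam ^ (m + k - j) ≤ lam ^ (k + 1) / (1 - lam) := by
  calc ∑ j ∈ Finset.range m, lam ^ (m + k - j)
      = ∑ i ∈ Finset.Ico (k + 1) (k + 1 + m), lam ^ i := by
        rw [Finset.sum_Ico_eq_sum_range, ← Finset.sum_range_reflect, add_tsub_cancel_left]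
        refine Finset.sum_congr rfl fun j hj => ?_
        rw [Finset.mem_range] at hj
        congr 1
        omega
    _ ≤ lam ^ (k + 1) / (1 - lam) := geom_sum_Ico_le_of_lt_one hlam₀ hlam₁

lemma LocHolder.birkhoff_sub_le {lam H : ℝ} {A : ShiftSpace M → ℝ} (hA : LocHolder M lam H A)
    (hH : 0 ≤ H) (hlam₀ : 0 ≤ lam) (hlam₁ : lam < 1) {m k : ℕ} {x y : ShiftSpace M}
    (hxy : Agree M (m + k) x y) :
    birkhoff M A m x - birkhoff M A m y ≤ H * lam ^ (k + 1) / (1 - lam) := by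
  have hterm (j : ℕ) (hj : j ∈ Finset.range m) :
      A ((shiftMap M)^[j] x) - A ((shiftMap M)^[j] y) ≤ H * lam ^ (m + k - j) := by
    have hj := Finset.mem_range.1 hj
    exact hA _ (by omega) _ _ (Agree.shiftMap_iterate (by rwa [Nat.sub_add_cancel (by omega)]))
  calc birkhoff M A m x - birkhoff M A m y
      = ∑ j ∈ Finset.range m, (A ((shiftMap M)^[j] x) - A ((shiftMap M)^[j] y)) :=
        (Finset.sum_sub_distrib ..).symm
    _ ≤ ∑ j ∈ Finset.range m, H * lam ^ (m + k - j) := Finset.sum_le_sum hterm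
    _ ≤ H * lam ^ (k + 1) / (1 - lam) := by
        rw [← Finset.mul_sum, mul_div_assoc]
        exact mul_le_mul_of_nonneg_left (sum_range_pow_sub_le hlam₀ hlam₁ m k) hH

end Shift

section ErgodicBound

variable {M : ℕ → ℕ → Bool}

lemma birkhoff_le_mul_betaA {A : ShiftSpace M → ℝ} (hA : BddAbove (Set.range A)) {n : ℕ}
    (hn : n ≠ 0) {z : ShiftSpace M} (hz : Function.IsPeriodicPt (shiftMap M) n z) :
    birkhoff M A n z ≤ n * betaA M A := by
  have hμ : ∫ x, A x ∂orbitMeasure (shiftMap M) n z ≤ betaA M A := by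
    obtain ⟨b, hb⟩ := hA
    refine le_csSup ⟨b, ?_⟩ ⟨_, ⟨isProbabilityMeasure_orbitMeasure hn z,
      map_orbitMeasure measurable_shiftMap hz⟩, integrable_orbitMeasure A _ hn z, rfl⟩
    rintro _ ⟨μ, ⟨hprob, -⟩, hint, rfl⟩
    calc ∫ x, A x ∂μ ≤ ∫ _, b ∂μ :=
          integral_mono hint (integrable_const b) fun x => hb ⟨x, rfl⟩
      _ = b := by simp
  rw [integral_orbitMeasure, inv_mul_le_iff₀ (by positivity)] at hμ
  exact hμ

lemma mem_BInf (x : ShiftSpace M) (i : ℕ) : x.1 i ∈ BInf M := by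
  refine Set.mem_iInter.2 fun n => ?_
  induction n generalizing i with
  | zero => exact ⟨x.1 (i + 1), x.2 i⟩
  | succ n ih => exact ⟨x.1 (i + 1), ih (i + 1), x.2 i⟩

lemma inShift_periodic_of_word {w : ℕ → ℕ} {n : ℕ} (hn : 0 < n)
    (hadm : ∀ a < n, M (w a) (w (a + 1)) = true) (hclose : w n = w 0) :
    InShift M fun t => w (t % n) := by
  intro t
  have hnext : w ((t % n + 1) % n) = w (t % n + 1) := by
    rcases (show t % n + 1 ≤ n from Nat.mod_lt t hn).lt_or_eq with h | h
    · rw [Nat.mod_eq_of_lt h]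
    · rw [h, Nat.mod_self, hclose]
  show M (w (t % n)) (w ((t + 1) % n)) = true
  rw [← Nat.mod_add_mod, hnext]
  exact hadm _ (Nat.mod_lt t hn)

lemma Primitive.exists_periodic_closing {F : Set ℕ} {K₀ : ℕ} (hprim : Primitive M F K₀)
    (y : ShiftSpace M) {k : ℕ} (hk : 0 < k) :
    ∃ z : ShiftSpace M, Function.IsPeriodicPt (shiftMap M) (k + K₀) z ∧ Agree M k y z ∧
      ∀ t < K₀, (shiftMap M)^[k + t] z ∈ FCyl M F := by
  obtain ⟨p, hp0, hpK, hpF, hpM⟩ := hprim (y.1 (k - 1)) (mem_BInf y _) (y.1 0) (mem_BInf y 0)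
  -- `z` repeats the word `y₀ … y_{k-1} p₁ … p_{K₀}`; the offset `t + 1 - k` makes the
  -- junction `y_{k-1} = p₀` uniform with the rest of the connecting path.
  set w : ℕ → ℕ := fun t => if t < k then y.1 t else p (t + 1 - k)
  have hw_lt : ∀ t < k, w t = y.1 t := fun t ht => if_pos ht
  have hw_ge : ∀ t, k ≤ t + 1 → w t = p (t + 1 - k) := by
    intro t ht
    by_cases h : t < k
    · rw [hw_lt t h, show t + 1 - k = 0 by omega, hp0, show t = k - 1 by omega]
    · exact if_neg h
  have hadm : ∀ a < k + K₀, M (w a) (w (a + 1)) = true := by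
    intro a ha
    by_cases h : a + 1 < k
    · rw [hw_lt a (by omega), hw_lt _ h]
      exact y.2 a
    · rw [hw_ge a (by omega), hw_ge (a + 1) (by omega),
        show a + 1 + 1 - k = a + 1 - k + 1 by omega]
      exact hpM _ (by omega)
  have hclose : w (k + K₀) = w 0 := by
    rw [hw_ge _ (by omega), hw_lt 0 hk, show k + K₀ + 1 - k = K₀ + 1 by omega, hpK]
  let z : ShiftSpace M :=
    ⟨fun t => w (t % (k + K₀)), inShift_periodic_of_word (by omega) hadm hclose⟩
  have hz : ∀ t < k + K₀, z.1 t = w t := fun t ht => congrArg w (Nat.mod_eq_of_lt ht)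
  refine ⟨z, Subtype.ext (funext fun j => ?_), fun j hj => ?_, fun t ht => ?_⟩
  · rw [shiftMap_iterate_apply]
    exact congrArg w (Nat.add_mod_right j _)
  · rw [hz j (by omega), hw_lt j hj]
  · show ((shiftMap M)^[k + t] z).1 0 ∈ F
    rw [shiftMap_iterate_apply, zero_add, hz _ (by omega), hw_ge _ (by omega),
      show k + t + 1 - k = t + 1 by omega]
    exact hpF _ (by omega) (by omega)

lemma Primitive.birkhoff_sub_mul_betaA_le {F : Set ℕ} {K₀ : ℕ} (hprim : Primitive M F K₀)
    {A : ShiftSpace M → ℝ} (hA : BddAbove (Set.range A)) {m : ℝ}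
    (hm : m ∈ lowerBounds (A '' FCyl M F)) {lam H : ℝ} (hhold : LocHolder M lam H A)
    (hH : 0 ≤ H) (hlam₀ : 0 ≤ lam) (hlam₁ : lam < 1) (y : ShiftSpace M) {k : ℕ}
    (hk : 0 < k) :
    birkhoff M A k y - k * betaA M A ≤ H * lam / (1 - lam) + K₀ * (betaA M A - m) := by
  obtain ⟨z, hzper, hyz, hzF⟩ := hprim.exists_periodic_closing y hk
  have hshadow : birkhoff M A k y - birkhoff M A k z ≤ H * lam / (1 - lam) := by
    simpa using hhold.birkhoff_sub_le hH hlam₀ hlam₁ (k := 0) hyz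
  have htail : K₀ * m ≤ birkhoff M A K₀ ((shiftMap M)^[k] z) := by
    have hmem (t : ℕ) (ht : t ∈ Finset.range K₀) :
        (shiftMap M)^[t] ((shiftMap M)^[k] z) ∈ FCyl M F := by
      rw [← Function.iterate_add_apply, add_comm]
      exact hzF t (Finset.mem_range.1 ht)
    calc (K₀ : ℝ) * m = ∑ _t ∈ Finset.range K₀, m := by simp
      _ ≤ _ := Finset.sum_le_sum fun t ht => hm ⟨_, hmem t ht, rfl⟩
  have hperiod := birkhoff_le_mul_betaA hA (by omega) hzper
  rw [birkhoff_add] at hperiod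
  push_cast at hperiod
  linarith

end ErgodicBound

section MinimalSubaction

variable {M : ℕ → ℕ → Bool} {A : ShiftSpace M → ℝ}

lemma zero_mem_uASet (x : ShiftSpace M) : (0 : ℝ) ∈ uASet M A x :=
  ⟨0, x, rfl, by simp [birkhoff]⟩

lemma uA_nonneg (hbdd : ∀ x, BddAbove (uASet M A x)) (x : ShiftSpace M) : 0 ≤ uA M A x :=
  le_csSup (hbdd x) (zero_mem_uASet x)

lemma uA_le {C : ℝ} (hC : ∀ k y, birkhoff M A k y - k * betaA M A ≤ C) (x : ShiftSpace M) :
    uA M A x ≤ C :=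
  csSup_le ⟨0, zero_mem_uASet x⟩ fun _ ⟨k, y, _, hr⟩ => hr ▸ hC k y

lemma add_sub_betaA_mem_uASet {x : ShiftSpace M} {r : ℝ} (hr : r ∈ uASet M A x) :
    A x + r - betaA M A ∈ uASet M A (shiftMap M x) := by
  obtain ⟨k, y, rfl, rfl⟩ := hr
  refine ⟨k + 1, y, Function.iterate_succ_apply' .., ?_⟩
  rw [birkhoff, Finset.sum_range_succ, ← birkhoff]
  push_cast
  ring

lemma uA_isSubaction (hbdd : ∀ x, BddAbove (uASet M A x)) (x : ShiftSpace M) :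
    A x + uA M A x - uA M A (shiftMap M x) ≤ betaA M A := by
  have : uA M A x ≤ uA M A (shiftMap M x) + betaA M A - A x :=
    csSup_le ⟨0, zero_mem_uASet x⟩ fun r hr => by
      have : A x + r - betaA M A ≤ uA M A (shiftMap M x) :=
        le_csSup (hbdd _) (add_sub_betaA_mem_uASet hr)
      linarith
  linarith

lemma birkhoff_sub_le_of_isSubaction {v : ShiftSpace M → ℝ}
    (hv : ∀ x, A x + v x - v (shiftMap M x) ≤ betaA M A) (k : ℕ) (y : ShiftSpace M) :
    birkhoff M A k y - k * betaA M A ≤ v ((shiftMap M)^[k] y) - v y := by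
  induction k with
  | zero => simp [birkhoff]
  | succ k ih =>
    rw [birkhoff, Finset.sum_range_succ, ← birkhoff, Function.iterate_succ_apply']
    push_cast
    linarith [hv ((shiftMap M)^[k] y)]

lemma uA_le_of_isSubaction {v : ShiftSpace M → ℝ} (hv₀ : ∀ x, 0 ≤ v x)
    (hv : ∀ x, A x + v x - v (shiftMap M x) ≤ betaA M A) (x : ShiftSpace M) :
    uA M A x ≤ v x :=
  csSup_le ⟨0, zero_mem_uASet x⟩ fun _ ⟨k, y, hy, hr⟩ => by
    have := birkhoff_sub_le_of_isSubaction hv k y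
    rw [hy] at this
    linarith [hv₀ y]

lemma exists_iterate_preimage_of_agree {k m : ℕ} {x y z : ShiftSpace M} (hk : 0 < k)
    (hxy : Agree M k x y) (hz : (shiftMap M)^[m] z = x) :
    ∃ z', (shiftMap M)^[m] z' = y ∧ Agree M (m + k) z z' := by
  have hzx (t : ℕ) : z.1 (t + m) = x.1 t := by rw [← hz, shiftMap_iterate_apply]
  set w : ℕ → ℕ := fun t => if t < m then z.1 t else y.1 (t - m)
  have hw_ge : ∀ t, m ≤ t → w t = y.1 (t - m) := fun t ht => if_neg (by omega)
  have hw_le : ∀ t ≤ m, w t = z.1 t := by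
    intro t ht
    by_cases h : t < m
    · exact if_pos h
    · rw [show t = m by omega, hw_ge m le_rfl, Nat.sub_self, ← hxy 0 hk, ← hzx, zero_add]
  have hw : InShift M w := by
    intro t
    by_cases h : t < m
    · rw [hw_le t h.le, hw_le (t + 1) h]
      exact z.2 t
    · rw [hw_ge t (by omega), hw_ge (t + 1) (by omega), show t + 1 - m = t - m + 1 by omega]
      exact y.2 _
  refine ⟨⟨w, hw⟩, Subtype.ext (funext fun j => ?_), fun j hj => ?_⟩
  · rw [shiftMap_iterate_apply]
    exact (hw_ge _ (by omega)).trans (by rw [Nat.add_sub_cancel])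
  · by_cases h : j < m
    · exact (hw_le j h.le).symm
    · show z.1 j = w j
      rw [hw_ge j (by omega), ← hxy _ (by omega), ← hzx, Nat.sub_add_cancel (by omega)]

lemma uA_locHolder (hbdd : ∀ x, BddAbove (uASet M A x)) {lam H : ℝ}
    (hhold : LocHolder M lam H A) (hH : 0 ≤ H) (hlam₀ : 0 ≤ lam) (hlam₁ : lam < 1) :
    LocHolder M lam (H * lam / (1 - lam)) (uA M A) := by
  intro k hk x y hxy
  have hshift : uA M A x ≤ uA M A y + H * lam ^ (k + 1) / (1 - lam) := by
    refine csSup_le ⟨0, zero_mem_uASet x⟩ ?_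
    rintro _ ⟨m, z, hz, rfl⟩
    obtain ⟨z', hz'y, hzz'⟩ := exists_iterate_preimage_of_agree hk hxy hz
    have hz' : birkhoff M A m z' - m * betaA M A ≤ uA M A y :=
      le_csSup (hbdd y) ⟨m, z', hz'y, rfl⟩
    linarith [hhold.birkhoff_sub_le hH hlam₀ hlam₁ hzz']
  have : H * lam ^ (k + 1) / (1 - lam) = H * lam / (1 - lam) * lam ^ k := by ring
  linarith

end MinimalSubaction

/-- For a primitive countable Markov shift and a bounded above, locally
Hölder potential `A` with `inf A|_{⋃_{i∈F}[i]} > -∞`, there is a unique minimal,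
nonnegative, bounded, locally Hölder sub-action `u_A`. -/
theorem exists_unique_minimal_subaction
    (M : ℕ → ℕ → Bool) (F : Set ℕ) (K₀ : ℕ) (lam H : ℝ)
    (hlam₀ : 0 < lam) (hlam₁ : lam < 1) (hH : 0 < H)
    (hprim : Primitive M F K₀)
    (A : ShiftSpace M → ℝ)
    (hbdd : BddAbove (Set.range A))
    (hbelow : BddBelow (A '' FCyl M F))
    (hhold : LocHolder M lam H A) :
    ∃! u : ShiftSpace M → ℝ,
      (∀ x, 0 ≤ u x) ∧
      BddAbove (Set.range u) ∧
      (∃ Hu : ℝ, 0 < Hu ∧ LocHolder M lam Hu u) ∧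
      (∀ x, A x + u x - u (shiftMap M x) ≤ betaA M A) ∧
      (∀ v : ShiftSpace M → ℝ, Continuous v → (∀ x, 0 ≤ v x) →
        (∀ x, A x + v x - v (shiftMap M x) ≤ betaA M A) →
        ∀ x, u x ≤ v x) := by
  obtain ⟨m, hm⟩ := hbelow
  set C := max (H * lam / (1 - lam) + K₀ * (betaA M A - m)) 0
  have hC (k : ℕ) (y : ShiftSpace M) : birkhoff M A k y - k * betaA M A ≤ C := by
    rcases Nat.eq_zero_or_pos k with rfl | hk
    · simp [birkhoff, C]
    · exact (hprim.birkhoff_sub_mul_betaA_le hbdd hm hhold hH.le hlam₀.le hlam₁ y hk).trans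
        (le_max_left _ _)
  have hbddu (x : ShiftSpace M) : BddAbove (uASet M A x) :=
    ⟨C, fun _ ⟨k, y, _, hr⟩ => hr ▸ hC k y⟩
  have hholdu := uA_locHolder hbddu hhold hH.le hlam₀.le hlam₁
  refine ⟨uA M A, ⟨uA_nonneg hbddu, ⟨C, Set.forall_mem_range.2 (uA_le hC)⟩,
    ⟨_, div_pos (mul_pos hH hlam₀) (sub_pos.2 hlam₁), hholdu⟩, uA_isSubaction hbddu,
    fun v _ hv₀ hv => uA_le_of_isSubaction hv₀ hv⟩, ?_⟩
  rintro u ⟨hu₀, -, -, hu, hmin⟩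
  funext x
  exact le_antisymm
    (hmin _ (hholdu.continuous hlam₀.le hlam₁) (uA_nonneg hbddu) (uA_isSubaction hbddu) x)
    (uA_le_of_isSubaction hu₀ hu x)
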